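/- arXiv:1410.7558 — 2 statements merged into one kernel-verified Lean document; each statement's English description precedes it below -/
import Mathlib

section
/- For every z₀ ∈ ℝ^d, every continuous control u : [t₀,T] → ℝ^d and every differentiable z : [t₀,T] → ℝ^d with z(t₀) = z₀ and z'(t) = A(t)z(t) + B(t)u(t) for all t, the quadratic cost satisfies z(T)ᵀQz(T) + ∫_{t₀}^{T} (z(t)ᵀW(t)z(t) + u(t)ᵀU(t)u(t)) dt ≥ −z₀ᵀ E(t₀) z₀, with equality if and only if u(t) = U(t)⁻¹ B(t)ᵀ E(t) z(t) for all t ∈ [t₀,T]. -/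
/-!
Along an admissible trajectory, the Riccati equation and completing the square give
`d/dt (zᵀ E z) = zᵀ W z + uᵀ U u - (u - K z)ᵀ U (u - K z)` with `K = U⁻¹ Bᵀ E`.
Integrating over `[t₀, T]` and using `E T = -Q` writes the cost as `-z₀ᵀ E(t₀) z₀` plus the
integral of a continuous defect which is nonnegative, and vanishes identically iff `u = K z`,
because `U` is positive definite.
-/

open Matrix Set intervalIntegral
open scoped Matrix

noncomputable section

section Calculus

variable {𝕜 : Type*} [NontriviallyNormedField 𝕜] {m n : Type*} [Fintype n] {t : 𝕜}

theorem HasDerivAt.dotProduct {x y : 𝕜 → n → 𝕜} {x' y' : n → 𝕜}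
    (hx : HasDerivAt x x' t) (hy : HasDerivAt y y' t) :
    HasDerivAt (fun s => x s ⬝ᵥ y s) (x' ⬝ᵥ y t + x t ⬝ᵥ y') t :=
  (HasDerivAt.fun_sum (u := Finset.univ) fun i _ =>
    (hasDerivAt_pi.1 hx i).mul (hasDerivAt_pi.1 hy i)).congr_deriv Finset.sum_add_distrib

theorem HasDerivAt.matrix_mulVec {M : 𝕜 → Matrix m n 𝕜} {M' : Matrix m n 𝕜}
    {x : 𝕜 → n → 𝕜} {x' : n → 𝕜}
    (hM : ∀ i j, HasDerivAt (fun s => M s i j) (M' i j) t) (hx : HasDerivAt x x' t) :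
    HasDerivAt (fun s => M s *ᵥ x s) (M' *ᵥ x t + M t *ᵥ x') t :=
  hasDerivAt_pi.2 fun i => (hasDerivAt_pi.2 (hM i)).dotProduct hx

end Calculus

section Continuity

variable {X R : Type*} [TopologicalSpace X] {m n : Type*} [Fintype n] {s : Set X}

theorem ContinuousOn.dotProduct [TopologicalSpace R] [NonUnitalNonAssocSemiring R]
    [IsTopologicalSemiring R] {x y : X → n → R}
    (hx : ContinuousOn x s) (hy : ContinuousOn y s) : ContinuousOn (fun p => x p ⬝ᵥ y p) s :=
  (continuous_fst.dotProduct continuous_snd).comp_continuousOn (hx.prodMk hy)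

theorem ContinuousOn.matrix_mulVec [TopologicalSpace R] [NonUnitalNonAssocSemiring R]
    [IsTopologicalSemiring R] {M : X → Matrix m n R} {x : X → n → R}
    (hM : ContinuousOn M s) (hx : ContinuousOn x s) : ContinuousOn (fun p => M p *ᵥ x p) s :=
  (continuous_fst.matrix_mulVec continuous_snd).comp_continuousOn (hM.prodMk hx)

theorem ContinuousOn.matrix_inv [NormedCommRing R] [CompleteSpace R] [DecidableEq n]
    {M : X → Matrix n n R} (hM : ContinuousOn M s) (hdet : ∀ p ∈ s, IsUnit (M p).det) :
    ContinuousOn (fun p => (M p)⁻¹) s := fun p hp =>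
  (continuousAt_matrix_inv _ (NormedRing.inverse_continuousAt (hdet p hp).unit)
    ).comp_continuousWithinAt (hM p hp)

omit [Fintype n] in
theorem continuousOn_matrix_of_hasDerivAt {𝕜 : Type*} [NontriviallyNormedField 𝕜]
    {M M' : 𝕜 → Matrix m n 𝕜} {s : Set 𝕜}
    (hM : ∀ t ∈ s, ∀ i j, HasDerivAt (fun r => M r i j) (M' t i j) t) : ContinuousOn M s :=
  continuousOn_pi.2 fun i => continuousOn_pi.2 fun j t ht =>
    (hM t ht i j).continuousAt.continuousWithinAt

end Continuity

theorem intervalIntegral.integral_eq_zero_iff_of_continuousOn_of_nonneg {f : ℝ → ℝ} {a b : ℝ}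
    (hab : a < b) (hf : ContinuousOn f (Icc a b)) (hf0 : ∀ t ∈ Icc a b, 0 ≤ f t) :
    ∫ t in a..b, f t = 0 ↔ ∀ t ∈ Icc a b, f t = 0 := by
  refine ⟨fun h => ?_, fun h => ?_⟩
  · by_contra! hpos
    obtain ⟨c, hc, hfc⟩ := hpos
    exact (integral_pos hab hf (fun t ht => hf0 t (Ioc_subset_Icc_self ht))
      ⟨c, hc, (hf0 c hc).lt_of_ne' hfc⟩).ne' h
  · rw [integral_congr (g := fun _ => 0) (by rwa [uIcc_of_le hab.le]), integral_zero]

namespace Matrix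

variable {m n : Type*} [Fintype m] [Fintype n] [DecidableEq m]

section Algebra

variable {R : Type*} [CommRing R]

def riccatiRHS (A W E : Matrix n n R) (B : Matrix n m R) (U : Matrix m m R) : Matrix n n R :=
  W - Aᵀ * E - E * A - E * B * U⁻¹ * Bᵀ * E

def riccatiFeedback (B : Matrix n m R) (U : Matrix m m R) (E : Matrix n n R) (x : n → R) :
    m → R :=
  U⁻¹ *ᵥ (Bᵀ *ᵥ (E *ᵥ x))

theorem riccati_completing_square (A W E : Matrix n n R) (B : Matrix n m R) (U : Matrix m m R)
    (hE : E.IsSymm) (hU : U.IsSymm) (hdet : IsUnit U.det) (x : n → R) (v : m → R) :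
    (A *ᵥ x + B *ᵥ v) ⬝ᵥ (E *ᵥ x) + x ⬝ᵥ (riccatiRHS A W E B U *ᵥ x)
        + x ⬝ᵥ (E *ᵥ (A *ᵥ x + B *ᵥ v))
      = x ⬝ᵥ (W *ᵥ x) + v ⬝ᵥ (U *ᵥ v)
        - (v - riccatiFeedback B U E x) ⬝ᵥ (U *ᵥ (v - riccatiFeedback B U E x)) := by
  set w := Bᵀ *ᵥ (E *ᵥ x)
  set k := riccatiFeedback B U E x
  have hk : U *ᵥ k = w := by
    rw [show k = U⁻¹ *ᵥ w from rfl, mulVec_mulVec, mul_nonsing_inv U hdet, one_mulVec]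
  have hAE : (A *ᵥ x) ⬝ᵥ (E *ᵥ x) = x ⬝ᵥ (Aᵀ *ᵥ (E *ᵥ x)) := by
    rw [dotProduct_transpose_mulVec, dotProduct_comm]
  have hBE : ∀ y, (B *ᵥ y) ⬝ᵥ (E *ᵥ x) = y ⬝ᵥ w := fun y => by
    rw [dotProduct_comm, ← dotProduct_transpose_mulVec]
  have hEB : ∀ y, x ⬝ᵥ (E *ᵥ (B *ᵥ y)) = y ⬝ᵥ w := fun y => by
    rw [← dotProduct_transpose_mulVec, hE, hBE]
  have hUk : k ⬝ᵥ (U *ᵥ v) = v ⬝ᵥ w := by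
    rw [← dotProduct_transpose_mulVec, hU, hk]
  simp only [riccatiRHS, sub_mulVec, mulVec_add, mulVec_sub, dotProduct_add, add_dotProduct,
    dotProduct_sub, sub_dotProduct, ← mulVec_mulVec]
  rw [hAE, hBE, hEB, hEB, hUk, hk, show U⁻¹ *ᵥ (Bᵀ *ᵥ (E *ᵥ x)) = k from rfl]
  ring

end Algebra

theorem hasDerivAt_dotProduct_riccati {𝕜 : Type*} [NontriviallyNormedField 𝕜]
    (A W : Matrix n n 𝕜) (B : Matrix n m 𝕜) (U : Matrix m m 𝕜) {E : 𝕜 → Matrix n n 𝕜}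
    {z : 𝕜 → n → 𝕜} {v : m → 𝕜} {t : 𝕜}
    (hE : ∀ i j, HasDerivAt (fun s => E s i j) (riccatiRHS A W (E t) B U i j) t)
    (hz : HasDerivAt z (A *ᵥ z t + B *ᵥ v) t) (hEt : (E t).IsSymm) (hU : U.IsSymm)
    (hdet : IsUnit U.det) :
    HasDerivAt (fun s => z s ⬝ᵥ (E s *ᵥ z s))
      (z t ⬝ᵥ (W *ᵥ z t) + v ⬝ᵥ (U *ᵥ v)
        - (v - riccatiFeedback B U (E t) (z t)) ⬝ᵥ (U *ᵥ (v - riccatiFeedback B U (E t) (z t))))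
      t := by
  have h := hz.dotProduct (HasDerivAt.matrix_mulVec hE hz)
  rwa [dotProduct_add, ← add_assoc, riccati_completing_square A W (E t) B U hEt hU hdet] at h

end Matrix

theorem Matrix.PosDef.dotProduct_mulVec_eq_zero_iff {n : Type*} [Fintype n] {M : Matrix n n ℝ}
    (hM : M.PosDef) {x : n → ℝ} : x ⬝ᵥ (M *ᵥ x) = 0 ↔ x = 0 := by
  refine ⟨fun h => ?_, fun h => by rw [h, zero_dotProduct]⟩
  by_contra hx
  simpa only [star_trivial, h, lt_self_iff_false] using hM.dotProduct_mulVec_pos hx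

theorem ContinuousOn.matrix_riccatiFeedback {X R : Type*} [TopologicalSpace X] {s : Set X}
    [NormedCommRing R] [CompleteSpace R] {m n : Type*} [Fintype m] [Fintype n] [DecidableEq m]
    {B : X → Matrix n m R} {U : X → Matrix m m R} {E : X → Matrix n n R} {x : X → n → R}
    (hB : ContinuousOn B s) (hU : ContinuousOn U s) (hdet : ∀ p ∈ s, IsUnit (U p).det)
    (hE : ContinuousOn E s) (hx : ContinuousOn x s) :
    ContinuousOn (fun p => riccatiFeedback (B p) (U p) (E p) (x p)) s :=
  (hU.matrix_inv hdet).matrix_mulVec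
    ((continuous_id.matrix_transpose.comp_continuousOn hB).matrix_mulVec (hE.matrix_mulVec hx))

section LinearQuadratic

variable {n m : Type*} [Fintype n] [Fintype m] [DecidableEq m]
  {A W E : ℝ → Matrix n n ℝ} {B : ℝ → Matrix n m ℝ} {U : ℝ → Matrix m m ℝ}
  {z : ℝ → n → ℝ} {u : ℝ → m → ℝ}

/-- The running cost exceeds the derivative of `zᵀ E z` by exactly this amount. -/
def lqDefect (B : ℝ → Matrix n m ℝ) (U : ℝ → Matrix m m ℝ) (E : ℝ → Matrix n n ℝ)
    (z : ℝ → n → ℝ) (u : ℝ → m → ℝ) (t : ℝ) : ℝ :=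
  (u t - riccatiFeedback (B t) (U t) (E t) (z t))
    ⬝ᵥ (U t *ᵥ (u t - riccatiFeedback (B t) (U t) (E t) (z t)))

theorem lqDefect_nonneg {t : ℝ} (hU : (U t).PosDef) : 0 ≤ lqDefect B U E z u t := by
  simpa only [lqDefect, star_trivial] using hU.posSemidef.dotProduct_mulVec_nonneg _

theorem lqDefect_eq_zero_iff {t : ℝ} (hU : (U t).PosDef) :
    lqDefect B U E z u t = 0 ↔ u t = riccatiFeedback (B t) (U t) (E t) (z t) :=
  hU.dotProduct_mulVec_eq_zero_iff.trans sub_eq_zero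

theorem continuousOn_lqDefect {s : Set ℝ} (hB : ContinuousOn B s) (hU : ContinuousOn U s)
    (hdet : ∀ t ∈ s, IsUnit (U t).det) (hE : ContinuousOn E s) (hz : ContinuousOn z s)
    (hu : ContinuousOn u s) : ContinuousOn (lqDefect B U E z u) s :=
  have he := hu.sub (hB.matrix_riccatiFeedback hU hdet hE hz)
  he.dotProduct (hU.matrix_mulVec he)

theorem integral_cost_eq_add_integral_lqDefect {a b : ℝ} (hab : a ≤ b)
    (hW : ContinuousOn W (Icc a b)) (hB : ContinuousOn B (Icc a b))
    (hU : ContinuousOn U (Icc a b)) (hdet : ∀ t ∈ Icc a b, IsUnit (U t).det)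
    (hUsymm : ∀ t ∈ Icc a b, (U t).IsSymm) (hEsymm : ∀ t ∈ Icc a b, (E t).IsSymm)
    (hE : ∀ t ∈ Icc a b, ∀ i j,
      HasDerivAt (fun s => E s i j) (riccatiRHS (A t) (W t) (E t) (B t) (U t) i j) t)
    (hz : ∀ t ∈ Icc a b, HasDerivAt z (A t *ᵥ z t + B t *ᵥ u t) t)
    (hu : ContinuousOn u (Icc a b)) :
    ∫ t in a..b, (z t ⬝ᵥ (W t *ᵥ z t) + u t ⬝ᵥ (U t *ᵥ u t))
      = z b ⬝ᵥ (E b *ᵥ z b) - z a ⬝ᵥ (E a *ᵥ z a) + ∫ t in a..b, lqDefect B U E z u t := by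
  have hzc : ContinuousOn z (Icc a b) := fun t ht => (hz t ht).continuousAt.continuousWithinAt
  have hcost : ContinuousOn (fun t => z t ⬝ᵥ (W t *ᵥ z t) + u t ⬝ᵥ (U t *ᵥ u t)) (Icc a b) :=
    (hzc.dotProduct (hW.matrix_mulVec hzc)).add (hu.dotProduct (hU.matrix_mulVec hu))
  have hdefect := continuousOn_lqDefect hB hU hdet (continuousOn_matrix_of_hasDerivAt hE) hzc hu
  have hV : ∀ t ∈ uIcc a b, HasDerivAt (fun s => z s ⬝ᵥ (E s *ᵥ z s))
      (z t ⬝ᵥ (W t *ᵥ z t) + u t ⬝ᵥ (U t *ᵥ u t) - lqDefect B U E z u t) t := by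
    rw [uIcc_of_le hab]
    exact fun t ht => hasDerivAt_dotProduct_riccati _ _ _ _ (hE t ht) (hz t ht) (hEsymm t ht)
      (hUsymm t ht) (hdet t ht)
  have hFTC :=
    integral_eq_sub_of_hasDerivAt hV ((hcost.sub hdefect).intervalIntegrable_of_Icc hab)
  rw [integral_sub (hcost.intervalIntegrable_of_Icc hab) (hdefect.intervalIntegrable_of_Icc hab)]
    at hFTC
  linarith

end LinearQuadratic

theorem statement15_general
    (d : ℕ) (t₀ T : ℝ) (ht : t₀ < T)
    (A B W U : ℝ → Matrix (Fin d) (Fin d) ℝ)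
    (hB : ∀ i j, ContinuousOn (fun t => B t i j) (Icc t₀ T))
    (hW : ∀ i j, ContinuousOn (fun t => W t i j) (Icc t₀ T))
    (hU : ∀ i j, ContinuousOn (fun t => U t i j) (Icc t₀ T))
    (hUpos : ∀ t ∈ Icc t₀ T, (U t).PosDef)
    (Q : Matrix (Fin d) (Fin d) ℝ)
    (E : ℝ → Matrix (Fin d) (Fin d) ℝ)
    (hET : E T = -Q)
    (hEsymm : ∀ t ∈ Icc t₀ T, (E t)ᵀ = E t)
    (hE : ∀ t ∈ Icc t₀ T, ∀ i j,
      HasDerivAt (fun s => E s i j)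
        ((W t - (A t)ᵀ * E t - E t * A t - E t * B t * (U t)⁻¹ * (B t)ᵀ * E t) i j) t)
    (z₀ : Fin d → ℝ) (u : ℝ → Fin d → ℝ)
    (hu : ∀ i, ContinuousOn (fun t => u t i) (Icc t₀ T))
    (z : ℝ → Fin d → ℝ)
    (hz0 : z t₀ = z₀)
    (hz : ∀ t ∈ Icc t₀ T, ∀ i,
      HasDerivAt (fun s => z s i) (((A t).mulVec (z t) + (B t).mulVec (u t)) i) t) :
    (z T ⬝ᵥ Q.mulVec (z T)
        + ∫ t in t₀..T, (z t ⬝ᵥ (W t).mulVec (z t) + u t ⬝ᵥ (U t).mulVec (u t))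
      ≥ -(z₀ ⬝ᵥ (E t₀).mulVec z₀))
    ∧ (z T ⬝ᵥ Q.mulVec (z T)
          + ∫ t in t₀..T, (z t ⬝ᵥ (W t).mulVec (z t) + u t ⬝ᵥ (U t).mulVec (u t))
        = -(z₀ ⬝ᵥ (E t₀).mulVec z₀)
      ↔ ∀ t ∈ Icc t₀ T, u t = (U t)⁻¹.mulVec ((B t)ᵀ.mulVec ((E t).mulVec (z t)))) := by
  have hUdet : ∀ t ∈ Icc t₀ T, IsUnit (U t).det :=
    fun t ht => isUnit_iff_isUnit_det _ |>.1 (hUpos t ht).isUnit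
  have hz' : ∀ t ∈ Icc t₀ T, HasDerivAt z (A t *ᵥ z t + B t *ᵥ u t) t :=
    fun t ht => hasDerivAt_pi.2 (hz t ht)
  have hBc : ContinuousOn B (Icc t₀ T) := continuousOn_pi.2 fun i => continuousOn_pi.2 (hB i)
  have hUc : ContinuousOn U (Icc t₀ T) := continuousOn_pi.2 fun i => continuousOn_pi.2 (hU i)
  have huc : ContinuousOn u (Icc t₀ T) := continuousOn_pi.2 hu
  have hdefect := continuousOn_lqDefect hBc hUc hUdet (continuousOn_matrix_of_hasDerivAt hE)
    (fun t ht => (hz' t ht).continuousAt.continuousWithinAt) huc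
  have hnonneg : ∀ t ∈ Icc t₀ T, 0 ≤ lqDefect B U E z u t :=
    fun t ht => lqDefect_nonneg (hUpos t ht)
  have hcost : z T ⬝ᵥ Q.mulVec (z T)
      + ∫ t in t₀..T, (z t ⬝ᵥ (W t).mulVec (z t) + u t ⬝ᵥ (U t).mulVec (u t))
      = -(z₀ ⬝ᵥ (E t₀).mulVec z₀) + ∫ t in t₀..T, lqDefect B U E z u t := by
    rw [integral_cost_eq_add_integral_lqDefect ht.le
      (continuousOn_pi.2 fun i => continuousOn_pi.2 (hW i)) hBc hUc hUdet
      (fun t ht => isHermitian_iff_isSymm.1 (hUpos t ht).isHermitian) hEsymm hE hz' huc,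
      hET, hz0, neg_mulVec, dotProduct_neg]
    ring
  rw [hcost, ge_iff_le, le_add_iff_nonneg_right, add_eq_left,
    integral_eq_zero_iff_of_continuousOn_of_nonneg ht hdefect hnonneg]
  exact ⟨integral_nonneg ht.le hnonneg,
    forall₂_congr fun t ht => lqDefect_eq_zero_iff (hUpos t ht)⟩

/-- fundamental theorem of Linear-Quadratic theory. For every admissible
pair `(z₀, u)` the quadratic cost is at least `−z₀ᵀ E(t₀) z₀`, with equality if and
only if `u(t) = U(t)⁻¹ B(t)ᵀ E(t) z(t)` on `[t₀,T]`. -/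
theorem statement15
    (d : ℕ) (hd : 1 ≤ d) (t₀ T : ℝ) (ht : t₀ < T)
    (A B W U : ℝ → Matrix (Fin d) (Fin d) ℝ)
    (hA : ∀ i j, ContinuousOn (fun t => A t i j) (Icc t₀ T))
    (hB : ∀ i j, ContinuousOn (fun t => B t i j) (Icc t₀ T))
    (hW : ∀ i j, ContinuousOn (fun t => W t i j) (Icc t₀ T))
    (hU : ∀ i j, ContinuousOn (fun t => U t i j) (Icc t₀ T))
    (hWpos : ∀ t ∈ Icc t₀ T, (W t).PosSemidef)
    (hUpos : ∀ t ∈ Icc t₀ T, (U t).PosDef)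
    (Q : Matrix (Fin d) (Fin d) ℝ) (hQ : Q.PosSemidef)
    (E : ℝ → Matrix (Fin d) (Fin d) ℝ)
    (hET : E T = -Q)
    (hEsymm : ∀ t ∈ Icc t₀ T, (E t)ᵀ = E t)
    (hE : ∀ t ∈ Icc t₀ T, ∀ i j,
      HasDerivAt (fun s => E s i j)
        ((W t - (A t)ᵀ * E t - E t * A t - E t * B t * (U t)⁻¹ * (B t)ᵀ * E t) i j) t)
    (z₀ : Fin d → ℝ) (u : ℝ → Fin d → ℝ)
    (hu : ∀ i, ContinuousOn (fun t => u t i) (Icc t₀ T))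
    (z : ℝ → Fin d → ℝ)
    (hz0 : z t₀ = z₀)
    (hz : ∀ t ∈ Icc t₀ T, ∀ i,
      HasDerivAt (fun s => z s i) (((A t).mulVec (z t) + (B t).mulVec (u t)) i) t) :
    (z T ⬝ᵥ Q.mulVec (z T)
        + ∫ t in t₀..T, (z t ⬝ᵥ (W t).mulVec (z t) + u t ⬝ᵥ (U t).mulVec (u t))
      ≥ -(z₀ ⬝ᵥ (E t₀).mulVec z₀))
    ∧ (z T ⬝ᵥ Q.mulVec (z T)
          + ∫ t in t₀..T, (z t ⬝ᵥ (W t).mulVec (z t) + u t ⬝ᵥ (U t).mulVec (u t))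
        = -(z₀ ⬝ᵥ (E t₀).mulVec z₀)
      ↔ ∀ t ∈ Icc t₀ T, u t = (U t)⁻¹.mulVec ((B t)ᵀ.mulVec ((E t).mulVec (z t)))) :=
  statement15_general d t₀ T ht A B W U hB hW hU hUpos Q E hET hEsymm hE z₀ u hu z hz0 hz
end
end

section
/- Let Ā ≥ 0 and Ē ≥ 0 be such that ‖A(t)‖ ≤ Ā and ‖E_λ(t)‖ ≤ Ē for all t ∈ [0,T]. Then for every t ∈ [0,T]: ‖E_λ(t) − E_∞(t)‖ ≤ (T Ē² / λ) · e^{2ĀT}. In particular, as λ → ∞ the Riccati solution E_λ(t) converges to the solution E_∞(t) of the linear (Lyapunov) matrix ODE for every t. -/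
/-!
The difference `D = E_λ - E_∞` vanishes at `0` and solves
`D' = -(Aᵀ D + D A) - λ⁻¹ E_λ²`, so `‖D'‖ ≤ 2Ā ‖D‖ + Ē²/λ` in the (submultiplicative) Frobenius
norm. Grönwall's inequality with zero initial value bounds `‖D(t)‖` by
`(Ē²/λ)(e^{2Āt} - 1)/(2Ā)`, and `e^y - 1 ≤ y e^y` turns this into `(t Ē²/λ) e^{2Āt}`,
which is monotone in `t ≤ T`.
-/

open Matrix Set intervalIntegral
open scoped Matrix

noncomputable section

/-- Frobenius norm of a real matrix. -/
def frob {m n : Type*} [Fintype m] [Fintype n] (M : Matrix m n ℝ) : ℝ :=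
  Real.sqrt (∑ i, ∑ j, (M i j) ^ 2)

attribute [local instance] Matrix.frobeniusNormedAddCommGroup Matrix.frobeniusNormedSpace

theorem gronwallBound_zero_le {K ε : ℝ} (hK : 0 ≤ K) (hε : 0 ≤ ε) (x : ℝ) :
    gronwallBound 0 K ε x ≤ ε * x * Real.exp (K * x) := by
  rcases hK.eq_or_lt with rfl | hK
  · simp [gronwallBound_K0]
  · have hexp := Real.self_sub_one_le_mul_log (Real.exp_pos (K * x)).le
    rw [Real.log_exp] at hexp
    calc gronwallBound 0 K ε x = ε / K * (Real.exp (K * x) - 1) := by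
          simp [gronwallBound_of_K_ne_0 hK.ne']
      _ ≤ ε / K * (Real.exp (K * x) * (K * x)) := by gcongr
      _ = ε * x * Real.exp (K * x) := by field_simp

theorem norm_le_mul_exp_of_norm_deriv_le {E : Type*} [NormedAddCommGroup E] [NormedSpace ℝ E]
    {f f' : ℝ → E} {K ε a b : ℝ} (hK : 0 ≤ K) (hε : 0 ≤ ε)
    (hf : ∀ x ∈ Icc a b, HasDerivAt f (f' x) x) (ha : f a = 0)
    (bound : ∀ x ∈ Ico a b, ‖f' x‖ ≤ K * ‖f x‖ + ε) :
    ∀ x ∈ Icc a b, ‖f x‖ ≤ ε * (b - a) * Real.exp (K * (b - a)) := by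
  intro x hx
  calc ‖f x‖ ≤ gronwallBound 0 K ε (x - a) :=
        norm_le_gronwallBound_of_norm_deriv_right_le
          (fun y hy => (hf y hy).continuousAt.continuousWithinAt)
          (fun y hy => (hf y (Ico_subset_Icc_self hy)).hasDerivWithinAt) (by simp [ha]) bound x hx
    _ ≤ gronwallBound 0 K ε (b - a) := gronwallBound_mono le_rfl hε hK (by linarith [hx.2])
    _ ≤ ε * (b - a) * Real.exp (K * (b - a)) := gronwallBound_zero_le hK hε _

theorem frob_eq_norm {m n : Type*} [Fintype m] [Fintype n] (M : Matrix m n ℝ) :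
    frob M = ‖M‖ := by
  rw [Matrix.frobenius_norm_def, frob, Real.sqrt_eq_rpow]
  simp_rw [Real.rpow_two, Real.norm_eq_abs, sq_abs]

theorem Matrix.hasDerivAt_of_hasDerivAt_entries {m n : Type*} [Fintype m] [Fintype n]
    {f : ℝ → Matrix m n ℝ} {f' : Matrix m n ℝ} {x : ℝ}
    (h : ∀ i j, HasDerivAt (fun s => f s i j) (f' i j) x) : HasDerivAt f f' x := by
  have hpi : HasDerivAt (fun s i j => f s i j) (fun i j => f' i j) x :=
    hasDerivAt_pi.2 fun i => hasDerivAt_pi.2 fun j => h i j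
  exact (Matrix.ofLinearEquiv ℝ).toContinuousLinearEquiv.hasFDerivAt.comp_hasDerivAt x hpi

theorem norm_riccati_sub_lyapunov_le {m n : Type*} [Fintype m] [Fintype n]
    (C : Matrix m n ℝ) (A E E' : Matrix n n ℝ) (c : ℝ) :
    ‖(Cᵀ * C - Aᵀ * E - E * A - c • (E * E)) - (Cᵀ * C - Aᵀ * E' - E' * A)‖
      ≤ 2 * ‖A‖ * ‖E - E'‖ + |c| * ‖E‖ ^ 2 := by
  have hdiff : (Cᵀ * C - Aᵀ * E - E * A - c • (E * E)) - (Cᵀ * C - Aᵀ * E' - E' * A)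
      = -(Aᵀ * (E - E') + (E - E') * A) - c • (E * E) := by
    simp only [mul_sub, sub_mul]
    abel
  rw [hdiff]
  calc _ ≤ ‖Aᵀ * (E - E')‖ + ‖(E - E') * A‖ + ‖c • (E * E)‖ := by
        grw [norm_sub_le, norm_neg, norm_add_le]
    _ ≤ ‖Aᵀ‖ * ‖E - E'‖ + ‖E - E'‖ * ‖A‖ + |c| * (‖E‖ * ‖E‖) := by
        rw [norm_smul, Real.norm_eq_abs]
        gcongr <;> exact frobenius_norm_mul _ _
    _ = 2 * ‖A‖ * ‖E - E'‖ + |c| * ‖E‖ ^ 2 := by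
        rw [frobenius_norm_transpose]
        ring

theorem statement16_general
    (d d' : ℕ) (T : ℝ) (lam : ℝ) (hlam : 0 < lam)
    (C : Matrix (Fin d') (Fin d) ℝ)
    (A : ℝ → Matrix (Fin d) (Fin d) ℝ)
    (Q : Matrix (Fin d) (Fin d) ℝ)
    (Elam Einf : ℝ → Matrix (Fin d) (Fin d) ℝ)
    (hElam0 : Elam 0 = Q) (hEinf0 : Einf 0 = Q)
    (hElam : ∀ t ∈ Icc (0:ℝ) T, ∀ i j,
      HasDerivAt (fun s => Elam s i j)
        ((Cᵀ * C - (A t)ᵀ * Elam t - Elam t * A t - (1 / lam) • (Elam t * Elam t)) i j) t)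
    (hEinf : ∀ t ∈ Icc (0:ℝ) T, ∀ i j,
      HasDerivAt (fun s => Einf s i j)
        ((Cᵀ * C - (A t)ᵀ * Einf t - Einf t * A t) i j) t)
    (Abar Ebar : ℝ)
    (hAb : ∀ t ∈ Icc (0:ℝ) T, frob (A t) ≤ Abar)
    (hEb : ∀ t ∈ Icc (0:ℝ) T, frob (Elam t) ≤ Ebar) :
    ∀ t ∈ Icc (0:ℝ) T,
      frob (Elam t - Einf t) ≤ (T * Ebar ^ 2 / lam) * Real.exp (2 * Abar * T) := by
  intro t ht
  have hAbar : 0 ≤ Abar := (Real.sqrt_nonneg _).trans (hAb t ht)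
  have hderiv : ∀ s ∈ Icc (0:ℝ) T, HasDerivAt (fun s => Elam s - Einf s)
      ((Cᵀ * C - (A s)ᵀ * Elam s - Elam s * A s - (1 / lam) • (Elam s * Elam s)) -
        (Cᵀ * C - (A s)ᵀ * Einf s - Einf s * A s)) s := fun s hs =>
    Matrix.hasDerivAt_of_hasDerivAt_entries fun i j => (hElam s hs i j).sub (hEinf s hs i j)
  have hbound : ∀ s ∈ Ico (0:ℝ) T,
      ‖(Cᵀ * C - (A s)ᵀ * Elam s - Elam s * A s - (1 / lam) • (Elam s * Elam s)) -
        (Cᵀ * C - (A s)ᵀ * Einf s - Einf s * A s)‖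
        ≤ 2 * Abar * ‖Elam s - Einf s‖ + Ebar ^ 2 / lam := by
    intro s hs
    have hAs : ‖A s‖ ≤ Abar := frob_eq_norm (A s) ▸ hAb s (Ico_subset_Icc_self hs)
    have hEs : ‖Elam s‖ ≤ Ebar := frob_eq_norm (Elam s) ▸ hEb s (Ico_subset_Icc_self hs)
    grw [norm_riccati_sub_lyapunov_le, abs_of_pos (one_div_pos.2 hlam), hAs, hEs]
    rw [one_div_mul_eq_div]
  have hgron := norm_le_mul_exp_of_norm_deriv_le (by positivity) (by positivity) hderiv
    (by simp [hElam0, hEinf0]) hbound t ht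
  rw [sub_zero] at hgron
  rw [frob_eq_norm]
  convert hgron using 1
  ring

/-- comparison of the Riccati solution `E_λ` with the solution `E_∞` of
the linear (Lyapunov) matrix ODE: `‖E_λ(t) − E_∞(t)‖ ≤ (T Ē²/λ) e^{2ĀT}` for all
`t ∈ [0,T]`. -/
theorem statement16
    (d d' : ℕ) (hd : 1 ≤ d) (hd' : 1 ≤ d') (T : ℝ) (hT : 0 < T) (lam : ℝ) (hlam : 0 < lam)
    (C : Matrix (Fin d') (Fin d) ℝ)
    (A : ℝ → Matrix (Fin d) (Fin d) ℝ)
    (hA : ∀ i j, ContinuousOn (fun t => A t i j) (Icc 0 T))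
    (Q : Matrix (Fin d) (Fin d) ℝ) (hQ : Q.PosSemidef)
    (Elam Einf : ℝ → Matrix (Fin d) (Fin d) ℝ)
    (hElam0 : Elam 0 = Q) (hEinf0 : Einf 0 = Q)
    (hElam : ∀ t ∈ Icc (0:ℝ) T, ∀ i j,
      HasDerivAt (fun s => Elam s i j)
        ((Cᵀ * C - (A t)ᵀ * Elam t - Elam t * A t - (1 / lam) • (Elam t * Elam t)) i j) t)
    (hEinf : ∀ t ∈ Icc (0:ℝ) T, ∀ i j,
      HasDerivAt (fun s => Einf s i j)
        ((Cᵀ * C - (A t)ᵀ * Einf t - Einf t * A t) i j) t)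
    (Abar Ebar : ℝ) (hAbar : 0 ≤ Abar) (hEbar : 0 ≤ Ebar)
    (hAb : ∀ t ∈ Icc (0:ℝ) T, frob (A t) ≤ Abar)
    (hEb : ∀ t ∈ Icc (0:ℝ) T, frob (Elam t) ≤ Ebar) :
    ∀ t ∈ Icc (0:ℝ) T,
      frob (Elam t - Einf t) ≤ (T * Ebar ^ 2 / lam) * Real.exp (2 * Abar * T) :=
  statement16_general d d' T lam hlam C A Q Elam Einf hElam0 hEinf0 hElam hEinf Abar Ebar hAb hEb
end
end
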